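/- Let f(n) = min(f₄(n), g(n)) for n ≥ 11, where f₄(n) = (n⁴−14n³+47n²−34n)/24 and g is as defined. Then f is strictly increasing and satisfies 2·f(n) ≥ f(n+2) for all n ≥ 11. -/

import Mathlib

def f₄ (n : ℤ) : ℤ := (n ^ 4 - 14 * n ^ 3 + 47 * n ^ 2 - 34 * n) / 24

def g (n : ℤ) : ℤ :=
  if n % 2 = 0 then 2 ^ (n / 2 - 6).toNat * 89 else 2 ^ ((n + 1) / 2 - 6).toNat * 55

def f (n : ℤ) : ℤ := min (f₄ n) (g n)

/-!
`g` doubles every two steps, while `f₄` grows by a factor of at most two every two steps from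
`n = 16` on. Since `f₄ ≤ g` at `n = 26` and `n = 27`, this propagates to `f₄ ≤ g` for all
`n ≥ 26`, so there `f = f₄` and both claims reduce to polynomial inequalities. The finitely many
`n` between `11` and `25` are checked by evaluation.
-/

theorem f₄_numerator_dvd (n : ℤ) : (24 : ℤ) ∣ n ^ 4 - 14 * n ^ 3 + 47 * n ^ 2 - 34 * n := by
  have hvanish : ∀ x : ZMod 24, x ^ 4 - 14 * x ^ 3 + 47 * x ^ 2 - 34 * x = 0 := by decide
  refine (ZMod.intCast_zmod_eq_zero_iff_dvd _ 24).mp ?_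
  push_cast
  exact hvanish _

theorem mul_f₄ (n : ℤ) : 24 * f₄ n = n ^ 4 - 14 * n ^ 3 + 47 * n ^ 2 - 34 * n :=
  Int.mul_ediv_cancel' (f₄_numerator_dvd n)

theorem f₄_lt_f₄_add_one {n : ℤ} (hn : 8 ≤ n) : f₄ n < f₄ (n + 1) := by
  nlinarith [mul_f₄ n, mul_f₄ (n + 1), sq_nonneg n, sq_nonneg (n - 8), sq_nonneg (n - 10)]

theorem f₄_add_two_le_two_mul {n : ℤ} (hn : 16 ≤ n) : f₄ (n + 2) ≤ 2 * f₄ n := by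
  nlinarith [mul_f₄ n, mul_f₄ (n + 2), sq_nonneg n, sq_nonneg (n - 16), sq_nonneg (n - 20)]

theorem g_add_two {n : ℤ} (hn : 11 ≤ n) : g (n + 2) = 2 * g n := by
  unfold g
  rw [show (n + 2) % 2 = n % 2 by omega]
  split_ifs
  · rw [show ((n + 2) / 2 - 6).toNat = (n / 2 - 6).toNat + 1 by omega, pow_succ]
    ring
  · rw [show ((n + 2 + 1) / 2 - 6).toNat = ((n + 1) / 2 - 6).toNat + 1 by omega, pow_succ]
    ring

theorem f₄_le_g {n : ℤ} (hn : 26 ≤ n) : f₄ n ≤ g n := by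
  suffices h : f₄ n ≤ g n ∧ f₄ (n + 1) ≤ g (n + 1) from h.1
  induction n, hn using Int.leInduction with
  | base => decide
  | succ m hm ih =>
    refine ⟨ih.2, ?_⟩
    calc f₄ (m + 1 + 1) = f₄ (m + 2) := by ring_nf
      _ ≤ 2 * f₄ m := f₄_add_two_le_two_mul (by omega)
      _ ≤ 2 * g m := by linarith [ih.1]
      _ = g (m + 2) := (g_add_two (by omega)).symm
      _ = g (m + 1 + 1) := by ring_nf

theorem f_eq_f₄ {n : ℤ} (hn : 26 ≤ n) : f n = f₄ n :=
  min_eq_left (f₄_le_g hn)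

/-- `f = min(f₄, g)` is strictly increasing and satisfies `2·f(n) ≥ f(n+2)`
for all `n ≥ 11`. -/
theorem stmt8 :
    (∀ n : ℤ, 11 ≤ n → f n < f (n + 1)) ∧ (∀ n : ℤ, 11 ≤ n → f (n + 2) ≤ 2 * f n) := by
  constructor
  · intro n hn
    rcases le_or_gt n 25 with hsmall | hlarge
    · interval_cases n <;> decide
    · rw [f_eq_f₄ (by omega), f_eq_f₄ (by omega)]
      exact f₄_lt_f₄_add_one (by omega)
  · intro n hn
    rcases le_or_gt n 25 with hsmall | hlarge
    · interval_cases n <;> decide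
    · calc f (n + 2) ≤ f₄ (n + 2) := min_le_left _ _
        _ ≤ 2 * f₄ n := f₄_add_two_le_two_mul (by omega)
        _ = 2 * f n := by rw [f_eq_f₄ (by omega)]
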